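/- Consider the extended finite-horizon LTV system of a plant N and a block-diagonal IQC filter Ψ=diag(Ψ_v,Ψ_w): state x=(x_N,x_v,x_w) with x_N'=A_N x_N+B_w w+B_d d; v=C_v x_N+D_{vw} w+D_{vd} d; x_v'=A₁x_v+B₁v, z_v=C₁x_v+D₁v; x_w'=A₂x_w+B₂w, z_w=C₂x_w+D₂w; e_I=C_I x_N+D_{Iw}w+D_{Id}d; e_E=C_E x_N; with z:=(z_v,z_w) and M:=diag(M_v,−M_w) where M_v(t), M_w(t) are positive definite for all t, and D₁(t), D₂(t) have full column rank. Let ε>0, γ>0, and suppose a continuously differentiable symmetric P on the extended state satisfies P(T)−𝒞_E(T)ᵀ𝒞_E(T) positive semidefinite and, for all t∈[0,T], [[P'+𝒜ᵀP+P𝒜, Pℬ],[ℬᵀP, 0]] + [[Q,S],[Sᵀ,R]] + [𝒞_z 𝒟_z]ᵀM[𝒞_z 𝒟_z] + εI negative semidefinite, where (𝒜,ℬ,𝒞_z,𝒟_z,𝒞_I,𝒟_I,𝒞_E) are the state-space matrices of the extended system, Q:=𝒞_Iᵀ𝒞_I, S:=𝒞_Iᵀ𝒟_I, R:=𝒟_Iᵀ𝒟_I−γ²diag(0_{n_w},I_{n_d}).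 Let X_v, X_w solve the respective factorization Riccati differential equations with terminal conditions X_v(T)=0, X_w(T)=0, let W_v, W_w be continuous square roots (W_vᵀW_v=D₁ᵀM_vD₁, W_wᵀW_w=D₂ᵀM_wD₂), and define the scaled signals ṽ:=W_v⁻ᵀ(B₁ᵀX_v+D₁ᵀM_vC₁)x_v+W_vv, w̃:=W_w⁻ᵀ(B₂ᵀX_w+D₂ᵀM_wC₂)x_w+W_ww, d̃:=γd. Then for all continuous inputs w, d and the trajectory with x(0)=0, the scaled system satisfies the nominal performance bound ‖e_E(T)‖² + ∫₀ᵀ(‖ṽ(t)‖²+‖e_I(t)‖²) dt ≤ ∫₀ᵀ‖w̃(t)‖² dt + (1−ε/γ²)∫₀ᵀ‖d̃(t)‖² dt. -/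

import Mathlib

open Matrix Set

/-- The matrix appearing in the robust-performance differential LMI. -/
noncomputable def dlmiRob {ι κ σ : Type*} [Fintype ι] [Fintype κ] [Fintype σ]
    [DecidableEq ι] [DecidableEq κ]
    (P' P 𝒜 : Matrix ι ι ℝ) (ℬ : Matrix ι κ ℝ)
    (Q : Matrix ι ι ℝ) (S : Matrix ι κ ℝ) (R : Matrix κ κ ℝ)
    (Cz : Matrix σ ι ℝ) (Dz : Matrix σ κ ℝ) (M : Matrix σ σ ℝ) (ε : ℝ) :
    Matrix (ι ⊕ κ) (ι ⊕ κ) ℝ :=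
  fromBlocks (P' + 𝒜ᵀ * P + P * 𝒜) (P * ℬ) (ℬᵀ * P) 0
    + fromBlocks Q S Sᵀ R
    + (fromCols Cz Dz)ᵀ * M * (fromCols Cz Dz)
    + ε • 1

/-!
Dissipation argument with the storage function `V = ξᵀ P ξ - x_vᵀ X_v x_v + x_wᵀ X_w x_w`,
`ξ = (x_N, x_v, x_w)`. Completing the square with the factorization Riccati equation gives
`‖ṽ‖² = z_vᵀ M_v z_v + d/dt (x_vᵀ X_v x_v)` and likewise for `w̃`, so the IQC term `zᵀ M z` of
the LMI is `‖ṽ‖² - ‖w̃‖²` up to the derivative of the filter part of `V`. Evaluated along a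
trajectory, the LMI therefore reads `‖ṽ‖² + ‖e_I‖² + V' ≤ ‖w̃‖² + (γ² - ε) ‖d‖²`; integrating
over `[0, T]` with `V 0 = 0` and `‖e_E T‖² ≤ V T` (as `X_v T = X_w T = 0`) gives the bound.
-/

section QuadraticForms

variable {ι κ σ m n p : Type*} [Fintype ι] [Fintype κ] [Fintype σ] [Fintype m] [Fintype n]
  [Fintype p]

lemma mulVec_dotProduct (N : Matrix m n ℝ) (x : n → ℝ) (y : m → ℝ) :
    (N *ᵥ x) ⬝ᵥ y = x ⬝ᵥ (Nᵀ *ᵥ y) := by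
  rw [dotProduct_mulVec, vecMul_transpose]

lemma dotProduct_self_nonneg (v : n → ℝ) : 0 ≤ v ⬝ᵥ v :=
  Finset.sum_nonneg fun i _ => mul_self_nonneg (v i)

lemma sumElim_dotProduct_fromBlocks_mulVec (A : Matrix ι ι ℝ) (B : Matrix ι κ ℝ)
    (C : Matrix κ ι ℝ) (D : Matrix κ κ ℝ) (x : ι → ℝ) (y : κ → ℝ) :
    Sum.elim x y ⬝ᵥ (fromBlocks A B C D *ᵥ Sum.elim x y)
      = x ⬝ᵥ (A *ᵥ x) + x ⬝ᵥ (B *ᵥ y) + (y ⬝ᵥ (C *ᵥ x) + y ⬝ᵥ (D *ᵥ y)) := by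
  rw [fromBlocks_mulVec, Sum.elim_comp_inl, Sum.elim_comp_inr, sumElim_dotProduct_sumElim,
    dotProduct_add, dotProduct_add]

def quadFormDeriv (M M' : Matrix n n ℝ) (x x' : n → ℝ) : ℝ :=
  x' ⬝ᵥ (M *ᵥ x) + x ⬝ᵥ (M' *ᵥ x) + x ⬝ᵥ (M *ᵥ x')

lemma dlmiRob_quadForm [DecidableEq ι] [DecidableEq κ] (P' P 𝒜 : Matrix ι ι ℝ)
    (ℬ : Matrix ι κ ℝ) (Q : Matrix ι ι ℝ) (S : Matrix ι κ ℝ) (R : Matrix κ κ ℝ)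
    (Cz : Matrix σ ι ℝ) (Dz : Matrix σ κ ℝ) (M : Matrix σ σ ℝ) (ε : ℝ) (ξ : ι → ℝ) (q : κ → ℝ) :
    Sum.elim ξ q ⬝ᵥ (dlmiRob P' P 𝒜 ℬ Q S R Cz Dz M ε *ᵥ Sum.elim ξ q)
      = quadFormDeriv P P' ξ (𝒜 *ᵥ ξ + ℬ *ᵥ q)
        + Sum.elim ξ q ⬝ᵥ (fromBlocks Q S Sᵀ R *ᵥ Sum.elim ξ q)
        + (Cz *ᵥ ξ + Dz *ᵥ q) ⬝ᵥ (M *ᵥ (Cz *ᵥ ξ + Dz *ᵥ q))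
        + ε * (ξ ⬝ᵥ ξ + q ⬝ᵥ q) := by
  have hz : fromCols Cz Dz *ᵥ Sum.elim ξ q = Cz *ᵥ ξ + Dz *ᵥ q := fromCols_mulVec_sumElim ..
  simp only [dlmiRob, add_mulVec, dotProduct_add, sumElim_dotProduct_fromBlocks_mulVec,
    ← mulVec_mulVec, ← mulVec_dotProduct, hz, smul_mulVec, one_mulVec, dotProduct_smul,
    smul_eq_mul, sumElim_dotProduct_sumElim, quadFormDeriv, add_dotProduct, zero_mulVec,
    dotProduct_zero, mulVec_add]
  ring

lemma sumElim_dotProduct_fromBlocks_gram_sub_mulVec (C : Matrix σ ι ℝ) (D : Matrix σ κ ℝ)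
    (R₀ : Matrix κ κ ℝ) (ξ : ι → ℝ) (q : κ → ℝ) :
    Sum.elim ξ q ⬝ᵥ (fromBlocks (Cᵀ * C) (Cᵀ * D) (Cᵀ * D)ᵀ (Dᵀ * D - R₀) *ᵥ Sum.elim ξ q)
      = (C *ᵥ ξ + D *ᵥ q) ⬝ᵥ (C *ᵥ ξ + D *ᵥ q) - q ⬝ᵥ (R₀ *ᵥ q) := by
  simp only [sumElim_dotProduct_fromBlocks_mulVec, transpose_mul, transpose_transpose,
    sub_mulVec, dotProduct_sub, ← mulVec_mulVec, ← mulVec_dotProduct, add_dotProduct,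
    dotProduct_add]
  rw [dotProduct_comm (D *ᵥ q) (C *ᵥ ξ)]
  ring

lemma mulVec_dotProduct_le_of_nonneg_sub {P : Matrix ι ι ℝ} {C : Matrix σ ι ℝ} {u : ι → ℝ}
    (h : 0 ≤ u ⬝ᵥ ((P - Cᵀ * C) *ᵥ u)) : (C *ᵥ u) ⬝ᵥ (C *ᵥ u) ≤ u ⬝ᵥ (P *ᵥ u) := by
  rw [sub_mulVec, dotProduct_sub, ← mulVec_mulVec, ← mulVec_dotProduct] at h
  linarith

lemma isUnit_det_of_transpose_mul_self_eq [DecidableEq m] {D : Matrix p m ℝ} {M : Matrix p p ℝ}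
    {W : Matrix m m ℝ} (hM : ∀ u : p → ℝ, u ≠ 0 → 0 < u ⬝ᵥ (M *ᵥ u))
    (hD : ∀ u : m → ℝ, D *ᵥ u = 0 → u = 0) (hW : Wᵀ * W = Dᵀ * M * D) : IsUnit W.det := by
  refine isUnit_iff_ne_zero.2 fun h0 => ?_
  obtain ⟨u, hu, hWu⟩ := exists_mulVec_eq_zero_iff.2 h0
  have hpos := hM _ (mt (hD u) hu)
  rw [mulVec_dotProduct, mulVec_mulVec, mulVec_mulVec, ← hW, ← mulVec_mulVec, hWu,
    mulVec_zero, dotProduct_zero] at hpos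
  exact hpos.false

end QuadraticForms

section Riccati

variable {m n p : Type*} [Fintype m] [Fintype n] [Fintype p] [DecidableEq m]

lemma dotProduct_self_inv_transpose_mulVec_add {W : Matrix m m ℝ} (hW : IsUnit W.det)
    (a b : m → ℝ) :
    ((Wᵀ)⁻¹ *ᵥ a + W *ᵥ b) ⬝ᵥ ((Wᵀ)⁻¹ *ᵥ a + W *ᵥ b)
      = a ⬝ᵥ ((Wᵀ * W)⁻¹ *ᵥ a) + 2 * (a ⬝ᵥ b) + b ⬝ᵥ ((Wᵀ * W) *ᵥ b) := by
  have hcross : ((Wᵀ)⁻¹ *ᵥ a) ⬝ᵥ (W *ᵥ b) = a ⬝ᵥ b := by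
    rw [mulVec_dotProduct, transpose_nonsing_inv, transpose_transpose, mulVec_mulVec,
      nonsing_inv_mul _ hW, one_mulVec]
  simp only [add_dotProduct, dotProduct_add, hcross, dotProduct_comm (W *ᵥ b),
    mulVec_dotProduct _ _ (W *ᵥ b), mulVec_dotProduct _ _ ((Wᵀ)⁻¹ *ᵥ a), mulVec_mulVec,
    transpose_nonsing_inv, transpose_transpose, Matrix.mul_inv_rev]
  ring

lemma riccati_completion {X X' A : Matrix n n ℝ} {B : Matrix n m ℝ} {C : Matrix p n ℝ}
    {D : Matrix p m ℝ} {M : Matrix p p ℝ} {W : Matrix m m ℝ}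
    (hX : Xᵀ = X) (hM : Mᵀ = M) (hW : Wᵀ * W = Dᵀ * M * D) (hWu : IsUnit W.det)
    (hRDE : X' + Aᵀ * X + X * A + Cᵀ * M * C -
      (X * B + Cᵀ * M * D) * (Dᵀ * M * D)⁻¹ * (X * B + Cᵀ * M * D)ᵀ = 0)
    (x : n → ℝ) (v : m → ℝ) :
    ((Wᵀ)⁻¹ *ᵥ ((Bᵀ * X + Dᵀ * M * C) *ᵥ x) + W *ᵥ v) ⬝ᵥ
        ((Wᵀ)⁻¹ *ᵥ ((Bᵀ * X + Dᵀ * M * C) *ᵥ x) + W *ᵥ v)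
      = (C *ᵥ x + D *ᵥ v) ⬝ᵥ (M *ᵥ (C *ᵥ x + D *ᵥ v))
        + quadFormDeriv X X' x (A *ᵥ x + B *ᵥ v) := by
  set K := Bᵀ * X + Dᵀ * M * C
  have hKT : X * B + Cᵀ * M * D = Kᵀ := by
    simp only [K, transpose_add, transpose_mul, transpose_transpose, hX, hM, Matrix.mul_assoc]
  have hX' : X' = Kᵀ * (Dᵀ * M * D)⁻¹ * K - Aᵀ * X - X * A - Cᵀ * M * C := by
    rw [hKT, transpose_transpose] at hRDE
    rw [← sub_eq_zero, ← hRDE]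
    abel
  rw [dotProduct_self_inv_transpose_mulVec_add hWu, hW, quadFormDeriv, hX']
  simp only [K, add_mulVec, sub_mulVec, mulVec_add, dotProduct_add, add_dotProduct,
    dotProduct_sub, ← mulVec_mulVec, mulVec_dotProduct, transpose_mul, transpose_add,
    transpose_transpose, hX, hM]
  rw [dotProduct_comm v (Bᵀ *ᵥ X *ᵥ x), dotProduct_comm v (Dᵀ *ᵥ M *ᵥ C *ᵥ x)]
  simp only [mulVec_dotProduct, transpose_transpose, hX, hM]
  ring

end Riccati

section ExtendedSystem

variable {nN n1 n2 nv nw nd nzv nzw nI : Type*} [Fintype nN] [Fintype n1] [Fintype n2]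
  [Fintype nv] [Fintype nw] [Fintype nd]

def extendedA (AN : Matrix nN nN ℝ) (B1 : Matrix n1 nv ℝ) (Cv : Matrix nv nN ℝ)
    (A1 : Matrix n1 n1 ℝ) (A2 : Matrix n2 n2 ℝ) : Matrix (nN ⊕ (n1 ⊕ n2)) (nN ⊕ (n1 ⊕ n2)) ℝ :=
  fromBlocks AN 0 (fromRows (B1 * Cv) 0) (fromBlocks A1 0 0 A2)

def extendedB (Bw : Matrix nN nw ℝ) (Bd : Matrix nN nd ℝ) (B1 : Matrix n1 nv ℝ)
    (Dvw : Matrix nv nw ℝ) (Dvd : Matrix nv nd ℝ) (B2 : Matrix n2 nw ℝ) :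
    Matrix (nN ⊕ (n1 ⊕ n2)) (nw ⊕ nd) ℝ :=
  fromRows (fromCols Bw Bd) (fromRows (fromCols (B1 * Dvw) (B1 * Dvd)) (fromCols B2 0))

def extendedCz (D1 : Matrix nzv nv ℝ) (Cv : Matrix nv nN ℝ) (C1 : Matrix nzv n1 ℝ)
    (C2 : Matrix nzw n2 ℝ) : Matrix (nzv ⊕ nzw) (nN ⊕ (n1 ⊕ n2)) ℝ :=
  fromBlocks (D1 * Cv) (fromCols C1 0) 0 (fromCols 0 C2)

def extendedDz (D1 : Matrix nzv nv ℝ) (Dvw : Matrix nv nw ℝ) (Dvd : Matrix nv nd ℝ)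
    (D2 : Matrix nzw nw ℝ) : Matrix (nzv ⊕ nzw) (nw ⊕ nd) ℝ :=
  fromBlocks (D1 * Dvw) (D1 * Dvd) D2 0

lemma extendedA_mulVec_add_extendedB_mulVec (AN : Matrix nN nN ℝ) (Bw : Matrix nN nw ℝ)
    (Bd : Matrix nN nd ℝ) (Cv : Matrix nv nN ℝ) (Dvw : Matrix nv nw ℝ) (Dvd : Matrix nv nd ℝ)
    (A1 : Matrix n1 n1 ℝ) (B1 : Matrix n1 nv ℝ) (A2 : Matrix n2 n2 ℝ) (B2 : Matrix n2 nw ℝ)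
    (a : nN → ℝ) (b : n1 → ℝ) (c : n2 → ℝ) (w : nw → ℝ) (d : nd → ℝ) :
    extendedA AN B1 Cv A1 A2 *ᵥ Sum.elim a (Sum.elim b c)
        + extendedB Bw Bd B1 Dvw Dvd B2 *ᵥ Sum.elim w d
      = Sum.elim (AN *ᵥ a + Bw *ᵥ w + Bd *ᵥ d)
          (Sum.elim (A1 *ᵥ b + B1 *ᵥ (Cv *ᵥ a + Dvw *ᵥ w + Dvd *ᵥ d)) (A2 *ᵥ c + B2 *ᵥ w)) := by
  ext (i | i | i) <;>
    simp [extendedA, extendedB, fromBlocks_mulVec, fromRows_mulVec, fromCols_mulVec,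
      mulVec_add, ← mulVec_mulVec] <;> ring

lemma extendedCz_mulVec_add_extendedDz_mulVec (Cv : Matrix nv nN ℝ) (Dvw : Matrix nv nw ℝ)
    (Dvd : Matrix nv nd ℝ) (C1 : Matrix nzv n1 ℝ) (D1 : Matrix nzv nv ℝ) (C2 : Matrix nzw n2 ℝ)
    (D2 : Matrix nzw nw ℝ) (a : nN → ℝ) (b : n1 → ℝ) (c : n2 → ℝ) (w : nw → ℝ) (d : nd → ℝ) :
    extendedCz D1 Cv C1 C2 *ᵥ Sum.elim a (Sum.elim b c) + extendedDz D1 Dvw Dvd D2 *ᵥ Sum.elim w d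
      = Sum.elim (C1 *ᵥ b + D1 *ᵥ (Cv *ᵥ a + Dvw *ᵥ w + Dvd *ᵥ d)) (C2 *ᵥ c + D2 *ᵥ w) := by
  ext (i | i) <;>
    simp [extendedCz, extendedDz, fromBlocks_mulVec, fromCols_mulVec, mulVec_add,
      ← mulVec_mulVec]
  ring

theorem scaled_dissipation_le [Fintype nzv] [Fintype nzw] [Fintype nI]
    [DecidableEq nN] [DecidableEq n1] [DecidableEq n2] [DecidableEq nv] [DecidableEq nw]
    [DecidableEq nd]
    {AN : Matrix nN nN ℝ} {Bw : Matrix nN nw ℝ} {Bd : Matrix nN nd ℝ} {Cv : Matrix nv nN ℝ}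
    {Dvw : Matrix nv nw ℝ} {Dvd : Matrix nv nd ℝ} {CI : Matrix nI nN ℝ} {DIw : Matrix nI nw ℝ}
    {DId : Matrix nI nd ℝ} {A1 : Matrix n1 n1 ℝ} {B1 : Matrix n1 nv ℝ} {C1 : Matrix nzv n1 ℝ}
    {D1 : Matrix nzv nv ℝ} {A2 : Matrix n2 n2 ℝ} {B2 : Matrix n2 nw ℝ} {C2 : Matrix nzw n2 ℝ}
    {D2 : Matrix nzw nw ℝ} {Mv : Matrix nzv nzv ℝ} {Mw : Matrix nzw nzw ℝ}
    {P P' : Matrix (nN ⊕ (n1 ⊕ n2)) (nN ⊕ (n1 ⊕ n2)) ℝ} {Xv Xv' : Matrix n1 n1 ℝ}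
    {Xw Xw' : Matrix n2 n2 ℝ} {Wv : Matrix nv nv ℝ} {Ww : Matrix nw nw ℝ} {ε γ : ℝ}
    {a : nN → ℝ} {b : n1 → ℝ} {c : n2 → ℝ} {w : nw → ℝ} {d : nd → ℝ}
    (hDLMI : Sum.elim (Sum.elim a (Sum.elim b c)) (Sum.elim w d) ⬝ᵥ
      (dlmiRob P' P (extendedA AN B1 Cv A1 A2) (extendedB Bw Bd B1 Dvw Dvd B2)
        ((fromCols CI (0 : Matrix nI (n1 ⊕ n2) ℝ))ᵀ * fromCols CI 0)
        ((fromCols CI (0 : Matrix nI (n1 ⊕ n2) ℝ))ᵀ * fromCols DIw DId)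
        ((fromCols DIw DId)ᵀ * fromCols DIw DId -
          γ ^ 2 • fromBlocks (0 : Matrix nw nw ℝ) 0 0 (1 : Matrix nd nd ℝ))
        (extendedCz D1 Cv C1 C2) (extendedDz D1 Dvw Dvd D2) (fromBlocks Mv 0 0 (-Mw)) ε *ᵥ
        Sum.elim (Sum.elim a (Sum.elim b c)) (Sum.elim w d)) ≤ 0)
    (hXv : Xvᵀ = Xv) (hMv : Mvᵀ = Mv) (hWv : Wvᵀ * Wv = D1ᵀ * Mv * D1) (hWvu : IsUnit Wv.det)
    (hRv : Xv' + A1ᵀ * Xv + Xv * A1 + C1ᵀ * Mv * C1 -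
      (Xv * B1 + C1ᵀ * Mv * D1) * (D1ᵀ * Mv * D1)⁻¹ * (Xv * B1 + C1ᵀ * Mv * D1)ᵀ = 0)
    (hXw : Xwᵀ = Xw) (hMw : Mwᵀ = Mw) (hWw : Wwᵀ * Ww = D2ᵀ * Mw * D2) (hWwu : IsUnit Ww.det)
    (hRw : Xw' + A2ᵀ * Xw + Xw * A2 + C2ᵀ * Mw * C2 -
      (Xw * B2 + C2ᵀ * Mw * D2) * (D2ᵀ * Mw * D2)⁻¹ * (Xw * B2 + C2ᵀ * Mw * D2)ᵀ = 0)
    (hε : 0 ≤ ε) (hγ : γ ≠ 0) :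
    ((Wvᵀ)⁻¹ *ᵥ ((B1ᵀ * Xv + D1ᵀ * Mv * C1) *ᵥ b) + Wv *ᵥ (Cv *ᵥ a + Dvw *ᵥ w + Dvd *ᵥ d)) ⬝ᵥ
          ((Wvᵀ)⁻¹ *ᵥ ((B1ᵀ * Xv + D1ᵀ * Mv * C1) *ᵥ b) + Wv *ᵥ (Cv *ᵥ a + Dvw *ᵥ w + Dvd *ᵥ d))
        + (CI *ᵥ a + DIw *ᵥ w + DId *ᵥ d) ⬝ᵥ (CI *ᵥ a + DIw *ᵥ w + DId *ᵥ d)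
      + (quadFormDeriv P P' (Sum.elim a (Sum.elim b c))
            (Sum.elim (AN *ᵥ a + Bw *ᵥ w + Bd *ᵥ d)
              (Sum.elim (A1 *ᵥ b + B1 *ᵥ (Cv *ᵥ a + Dvw *ᵥ w + Dvd *ᵥ d)) (A2 *ᵥ c + B2 *ᵥ w)))
          - quadFormDeriv Xv Xv' b (A1 *ᵥ b + B1 *ᵥ (Cv *ᵥ a + Dvw *ᵥ w + Dvd *ᵥ d))
          + quadFormDeriv Xw Xw' c (A2 *ᵥ c + B2 *ᵥ w))
      ≤ ((Wwᵀ)⁻¹ *ᵥ ((B2ᵀ * Xw + D2ᵀ * Mw * C2) *ᵥ c) + Ww *ᵥ w) ⬝ᵥ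
          ((Wwᵀ)⁻¹ *ᵥ ((B2ᵀ * Xw + D2ᵀ * Mw * C2) *ᵥ c) + Ww *ᵥ w)
        + (1 - ε / γ ^ 2) * ((γ • d) ⬝ᵥ (γ • d)) := by
  rw [dlmiRob_quadForm, extendedA_mulVec_add_extendedB_mulVec,
    extendedCz_mulVec_add_extendedDz_mulVec, sumElim_dotProduct_fromBlocks_gram_sub_mulVec,
    sumElim_dotProduct_fromBlocks_mulVec] at hDLMI
  simp only [fromCols_mulVec_sumElim, zero_mulVec, add_zero, smul_mulVec, dotProduct_smul,
    sumElim_dotProduct_fromBlocks_mulVec, dotProduct_zero, one_mulVec, zero_add, neg_mulVec,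
    dotProduct_neg, smul_eq_mul, sumElim_dotProduct_sumElim, ← add_assoc (CI *ᵥ a)] at hDLMI
  have hscale : (1 - ε / γ ^ 2) * ((γ • d) ⬝ᵥ (γ • d)) = (γ ^ 2 - ε) * (d ⬝ᵥ d) := by
    simp only [smul_dotProduct, dotProduct_smul, smul_eq_mul]
    field_simp
  rw [hscale, riccati_completion hXv hMv hWv hWvu hRv, riccati_completion hXw hMw hWw hWwu hRw]
  have hεterm : ε * (d ⬝ᵥ d) ≤ ε * (a ⬝ᵥ a + (b ⬝ᵥ b + c ⬝ᵥ c) + (w ⬝ᵥ w + d ⬝ᵥ d)) := by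
    have := dotProduct_self_nonneg a
    have := dotProduct_self_nonneg b
    have := dotProduct_self_nonneg c
    have := dotProduct_self_nonneg w
    gcongr
    linarith
  linarith

end ExtendedSystem

section Calculus

variable {m n : Type*}

lemma hasDerivAt_sumElim_apply {x : ℝ → m → ℝ} {y : ℝ → n → ℝ} {x' : m → ℝ} {y' : n → ℝ}
    {t : ℝ} (hx : ∀ i, HasDerivAt (fun s => x s i) (x' i) t)
    (hy : ∀ i, HasDerivAt (fun s => y s i) (y' i) t) :
    ∀ i, HasDerivAt (fun s => Sum.elim (x s) (y s) i) (Sum.elim x' y' i) t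
  | .inl i => hx i
  | .inr i => hy i

lemma hasDerivAt_quadForm [Fintype n] {x : ℝ → n → ℝ} {M : ℝ → Matrix n n ℝ} {x' : n → ℝ}
    {M' : Matrix n n ℝ} {t : ℝ} (hx : ∀ i, HasDerivAt (fun s => x s i) (x' i) t)
    (hM : ∀ i j, HasDerivAt (fun s => M s i j) (M' i j) t) :
    HasDerivAt (fun s => x s ⬝ᵥ (M s *ᵥ x s)) (quadFormDeriv (M t) M' (x t) x') t := by
  have h : ∀ i j, HasDerivAt (fun s => x s i * (M s i j * x s j))
      (x' i * (M t i j * x t j) + x t i * (M' i j * x t j) + x t i * (M t i j * x' j)) t :=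
    fun i j => ((hx i).fun_mul ((hM i j).fun_mul (hx j))).congr_deriv (by ring)
  have hsum : HasDerivAt (fun s => ∑ i, ∑ j, x s i * (M s i j * x s j))
      (∑ i, ∑ j, (x' i * (M t i j * x t j) + x t i * (M' i j * x t j)
        + x t i * (M t i j * x' j))) t :=
    HasDerivAt.fun_sum fun i _ => HasDerivAt.fun_sum fun j _ => h i j
  convert hsum using 1
  · funext s
    simp [dotProduct, mulVec, Finset.mul_sum]
  · simp [quadFormDeriv, dotProduct, mulVec, Finset.mul_sum, Finset.sum_add_distrib]

lemma continuousOn_of_hasDerivAt_apply {x x' : ℝ → n → ℝ} {s : Set ℝ}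
    (h : ∀ t ∈ s, ∀ i, HasDerivAt (fun u => x u i) (x' t i) t) : ContinuousOn x s :=
  fun t ht => (continuousAt_pi.2 fun i => (h t ht i).continuousAt).continuousWithinAt

lemma continuousOn_matrix_of_hasDerivAt_apply {A A' : ℝ → Matrix m n ℝ} {s : Set ℝ}
    (h : ∀ t ∈ s, ∀ i j, HasDerivAt (fun u => A u i j) (A' t i j) t) : ContinuousOn A s :=
  continuousOn_pi.2 fun i => continuousOn_of_hasDerivAt_apply fun t ht => h t ht i

open MeasureTheory in
theorem add_integral_le_of_dissipation {V V' F G H : ℝ → ℝ} {a b c e : ℝ} (hab : a ≤ b)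
    (hV : ∀ t ∈ Icc a b, HasDerivAt V (V' t) t) (hF : ContinuousOn F (Icc a b))
    (hG : ContinuousOn G (Icc a b)) (hH : ContinuousOn H (Icc a b))
    (hdiss : ∀ t ∈ Ioo a b, F t + V' t ≤ G t + c * H t) (ha : V a = 0) (hb : e ≤ V b) :
    e + ∫ t in a..b, F t ≤ (∫ t in a..b, G t) + c * ∫ t in a..b, H t := by
  -- A one-sided FTC inequality: `V'` itself need not be integrable.
  have hcH : ContinuousOn (fun t => c * H t) (Icc a b) := continuousOn_const.mul hH
  have hφ := intervalIntegral.sub_le_integral_of_hasDeriv_right_of_le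
    (φ := fun t => G t + c * H t - F t) hab
    (fun t ht => (hV t ht).continuousAt.continuousWithinAt)
    (fun t ht => (hV t (Ioo_subset_Icc_self ht)).hasDerivWithinAt)
    ((hG.add hcH).sub hF).integrableOn_Icc
    (fun t ht => le_sub_iff_add_le'.2 (hdiss t ht))
  have hGH : IntervalIntegrable (fun t => G t + c * H t) volume a b :=
    (hG.add hcH).intervalIntegrable_of_Icc hab
  rw [intervalIntegral.integral_sub hGH (hF.intervalIntegrable_of_Icc hab),
    intervalIntegral.integral_add (hG.intervalIntegrable_of_Icc hab)
      (hcH.intervalIntegrable_of_Icc hab), intervalIntegral.integral_const_mul] at hφ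
  linarith

end Calculus

section Continuity

variable {X : Type*} [TopologicalSpace X] {s : Set X} {l m n : Type*}

lemma continuousOn_matrix {A : X → Matrix m n ℝ} (h : ∀ i j, ContinuousOn (fun x => A x i j) s) :
    ContinuousOn A s :=
  continuousOn_pi.2 fun i => continuousOn_pi.2 (h i)

lemma ContinuousOn.matrix_mul [Fintype m] {A : X → Matrix l m ℝ} {B : X → Matrix m n ℝ}
    (hA : ContinuousOn A s) (hB : ContinuousOn B s) : ContinuousOn (fun x => A x * B x) s :=
  (continuous_fst.matrix_mul continuous_snd).comp_continuousOn (hA.prodMk hB)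

lemma ContinuousOn.matrix_mulVec [Fintype n] {A : X → Matrix m n ℝ} {v : X → n → ℝ}
    (hA : ContinuousOn A s) (hv : ContinuousOn v s) : ContinuousOn (fun x => A x *ᵥ v x) s :=
  (continuous_fst.matrix_mulVec continuous_snd).comp_continuousOn (hA.prodMk hv)

lemma ContinuousOn.matrix_transpose {A : X → Matrix m n ℝ} (hA : ContinuousOn A s) :
    ContinuousOn (fun x => (A x)ᵀ) s :=
  continuous_id.matrix_transpose.comp_continuousOn hA

lemma ContinuousOn.dotProduct [Fintype n] {u v : X → n → ℝ} (hu : ContinuousOn u s)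
    (hv : ContinuousOn v s) : ContinuousOn (fun x => u x ⬝ᵥ v x) s :=
  (continuous_fst.dotProduct continuous_snd).comp_continuousOn (hu.prodMk hv)

lemma ContinuousOn.matrix_inv [Fintype n] [DecidableEq n] {A : X → Matrix n n ℝ}
    (hA : ContinuousOn A s) (hdet : ∀ x ∈ s, IsUnit (A x).det) :
    ContinuousOn (fun x => (A x)⁻¹) s :=
  fun x hx => ((continuousAt_matrix_inv _
    (NormedRing.inverse_continuousAt (hdet x hx).unit)).comp_continuousWithinAt (hA x hx))

lemma continuousOn_scaledSignal [Fintype m] [Fintype n] {p : Type*} [Fintype p] [DecidableEq m]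
    {W : X → Matrix m m ℝ} {B : X → Matrix n m ℝ} {Y : X → Matrix n n ℝ} {D : X → Matrix p m ℝ}
    {M : X → Matrix p p ℝ} {C : X → Matrix p n ℝ} {x : X → n → ℝ} {v : X → m → ℝ}
    (hW : ContinuousOn W s) (hWu : ∀ t ∈ s, IsUnit (W t).det) (hB : ContinuousOn B s)
    (hY : ContinuousOn Y s) (hD : ContinuousOn D s) (hM : ContinuousOn M s)
    (hC : ContinuousOn C s) (hx : ContinuousOn x s) (hv : ContinuousOn v s) :
    ContinuousOn (fun t => ((W t)ᵀ)⁻¹ *ᵥ (((B t)ᵀ * Y t + (D t)ᵀ * M t * C t) *ᵥ x t) + W t *ᵥ v t)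
      s := by
  have hWT : ContinuousOn (fun t => ((W t)ᵀ)⁻¹) s :=
    hW.matrix_transpose.matrix_inv fun t ht => by simpa only [det_transpose] using hWu t ht
  have hK := (hB.matrix_transpose.matrix_mul hY).add
    ((hD.matrix_transpose.matrix_mul hM).matrix_mul hC)
  exact (hWT.matrix_mulVec (hK.matrix_mulVec hx)).add (hW.matrix_mulVec hv)

end Continuity

theorem scaled_plant_nominal_performance_general
    {nN n1 n2 nv nw nd nzv nzw nI nE : ℕ} {T : ℝ} (hT : 0 < T)
    -- plant N
    (AN : ℝ → Matrix (Fin nN) (Fin nN) ℝ)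
    (Bw : ℝ → Matrix (Fin nN) (Fin nw) ℝ)
    (Bd : ℝ → Matrix (Fin nN) (Fin nd) ℝ)
    (Cv : ℝ → Matrix (Fin nv) (Fin nN) ℝ)
    (Dvw : ℝ → Matrix (Fin nv) (Fin nw) ℝ)
    (Dvd : ℝ → Matrix (Fin nv) (Fin nd) ℝ)
    (CI : ℝ → Matrix (Fin nI) (Fin nN) ℝ)
    (DIw : ℝ → Matrix (Fin nI) (Fin nw) ℝ)
    (DId : ℝ → Matrix (Fin nI) (Fin nd) ℝ)
    (CE : ℝ → Matrix (Fin nE) (Fin nN) ℝ)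
    -- IQC filter blocks Ψ_v, Ψ_w
    (A1 : ℝ → Matrix (Fin n1) (Fin n1) ℝ) (B1 : ℝ → Matrix (Fin n1) (Fin nv) ℝ)
    (C1 : ℝ → Matrix (Fin nzv) (Fin n1) ℝ) (D1 : ℝ → Matrix (Fin nzv) (Fin nv) ℝ)
    (A2 : ℝ → Matrix (Fin n2) (Fin n2) ℝ) (B2 : ℝ → Matrix (Fin n2) (Fin nw) ℝ)
    (C2 : ℝ → Matrix (Fin nzw) (Fin n2) ℝ) (D2 : ℝ → Matrix (Fin nzw) (Fin nw) ℝ)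
    (hCv : ∀ i j, ContinuousOn (fun t => Cv t i j) (Icc 0 T))
    (hDvw : ∀ i j, ContinuousOn (fun t => Dvw t i j) (Icc 0 T))
    (hDvd : ∀ i j, ContinuousOn (fun t => Dvd t i j) (Icc 0 T))
    (hCI : ∀ i j, ContinuousOn (fun t => CI t i j) (Icc 0 T))
    (hDIw : ∀ i j, ContinuousOn (fun t => DIw t i j) (Icc 0 T))
    (hDId : ∀ i j, ContinuousOn (fun t => DId t i j) (Icc 0 T))
    (hB1 : ∀ i j, ContinuousOn (fun t => B1 t i j) (Icc 0 T))
    (hC1 : ∀ i j, ContinuousOn (fun t => C1 t i j) (Icc 0 T))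
    (hD1 : ∀ i j, ContinuousOn (fun t => D1 t i j) (Icc 0 T))
    (hB2 : ∀ i j, ContinuousOn (fun t => B2 t i j) (Icc 0 T))
    (hC2 : ∀ i j, ContinuousOn (fun t => C2 t i j) (Icc 0 T))
    (hD2 : ∀ i j, ContinuousOn (fun t => D2 t i j) (Icc 0 T))
    -- full column rank of D₁, D₂
    (hD1rank : ∀ t ∈ Icc (0:ℝ) T, ∀ u : Fin nv → ℝ, D1 t *ᵥ u = 0 → u = 0)
    (hD2rank : ∀ t ∈ Icc (0:ℝ) T, ∀ u : Fin nw → ℝ, D2 t *ᵥ u = 0 → u = 0)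
    -- IQC multipliers M_v ≻ 0, M_w ≻ 0
    (Mv : ℝ → Matrix (Fin nzv) (Fin nzv) ℝ) (Mw : ℝ → Matrix (Fin nzw) (Fin nzw) ℝ)
    (hMvcont : ∀ i j, ContinuousOn (fun t => Mv t i j) (Icc 0 T))
    (hMwcont : ∀ i j, ContinuousOn (fun t => Mw t i j) (Icc 0 T))
    (hMvsym : ∀ t ∈ Icc (0:ℝ) T, (Mv t)ᵀ = Mv t)
    (hMwsym : ∀ t ∈ Icc (0:ℝ) T, (Mw t)ᵀ = Mw t)
    (hMvpd : ∀ t ∈ Icc (0:ℝ) T, ∀ u : Fin nzv → ℝ, u ≠ 0 → 0 < u ⬝ᵥ (Mv t *ᵥ u))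
    (hMwpd : ∀ t ∈ Icc (0:ℝ) T, ∀ u : Fin nzw → ℝ, u ≠ 0 → 0 < u ⬝ᵥ (Mw t *ᵥ u))
    (ε γ : ℝ) (hε : 0 < ε) (hγ : 0 < γ)
    -- storage matrix P for the extended system
    (P P' : ℝ → Matrix (Fin nN ⊕ (Fin n1 ⊕ Fin n2)) (Fin nN ⊕ (Fin n1 ⊕ Fin n2)) ℝ)
    (hPderiv : ∀ t ∈ Icc (0:ℝ) T, ∀ i j, HasDerivAt (fun s => P s i j) (P' t i j) t)
    -- terminal condition P(T) - 𝒞_E(T)ᵀ𝒞_E(T) ⪰ 0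
    (hPT : ∀ u : (Fin nN ⊕ (Fin n1 ⊕ Fin n2)) → ℝ,
      0 ≤ u ⬝ᵥ ((P T -
        (fromCols (CE T) (0 : Matrix (Fin nE) (Fin n1 ⊕ Fin n2) ℝ))ᵀ *
          fromCols (CE T) (0 : Matrix (Fin nE) (Fin n1 ⊕ Fin n2) ℝ)) *ᵥ u))
    -- the robust-performance differential LMI for the extended system
    (hDLMI : ∀ t ∈ Icc (0:ℝ) T,
      ∀ u : ((Fin nN ⊕ (Fin n1 ⊕ Fin n2)) ⊕ (Fin nw ⊕ Fin nd)) → ℝ,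
      u ⬝ᵥ ((dlmiRob (P' t) (P t)
        (fromBlocks (AN t) 0 (fromRows (B1 t * Cv t) 0)
          (fromBlocks (A1 t) 0 0 (A2 t)))
        (fromRows (fromCols (Bw t) (Bd t))
          (fromRows (fromCols (B1 t * Dvw t) (B1 t * Dvd t))
            (fromCols (B2 t) 0)))
        ((fromCols (CI t) (0 : Matrix (Fin nI) (Fin n1 ⊕ Fin n2) ℝ))ᵀ *
          fromCols (CI t) (0 : Matrix (Fin nI) (Fin n1 ⊕ Fin n2) ℝ))
        ((fromCols (CI t) (0 : Matrix (Fin nI) (Fin n1 ⊕ Fin n2) ℝ))ᵀ *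
          fromCols (DIw t) (DId t))
        ((fromCols (DIw t) (DId t))ᵀ * fromCols (DIw t) (DId t) -
          γ ^ 2 • fromBlocks (0 : Matrix (Fin nw) (Fin nw) ℝ) 0 0
            (1 : Matrix (Fin nd) (Fin nd) ℝ))
        (fromBlocks (D1 t * Cv t) (fromCols (C1 t) 0) 0 (fromCols 0 (C2 t)))
        (fromBlocks (D1 t * Dvw t) (D1 t * Dvd t) (D2 t) 0)
        (fromBlocks (Mv t) 0 0 (-(Mw t))) ε) *ᵥ u) ≤ 0)
    -- factorization Riccati solutions with zero terminal conditions
    (Xv Xv' : ℝ → Matrix (Fin n1) (Fin n1) ℝ)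
    (hXvsym : ∀ t ∈ Icc (0:ℝ) T, (Xv t)ᵀ = Xv t)
    (hXvderiv : ∀ t ∈ Icc (0:ℝ) T, ∀ i j, HasDerivAt (fun s => Xv s i j) (Xv' t i j) t)
    (hXvT : Xv T = 0)
    (hXvRDE : ∀ t ∈ Icc (0:ℝ) T,
      Xv' t + (A1 t)ᵀ * Xv t + Xv t * A1 t + (C1 t)ᵀ * Mv t * C1 t -
        (Xv t * B1 t + (C1 t)ᵀ * Mv t * D1 t) * ((D1 t)ᵀ * Mv t * D1 t)⁻¹ *
          (Xv t * B1 t + (C1 t)ᵀ * Mv t * D1 t)ᵀ = 0)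
    (Xw Xw' : ℝ → Matrix (Fin n2) (Fin n2) ℝ)
    (hXwsym : ∀ t ∈ Icc (0:ℝ) T, (Xw t)ᵀ = Xw t)
    (hXwderiv : ∀ t ∈ Icc (0:ℝ) T, ∀ i j, HasDerivAt (fun s => Xw s i j) (Xw' t i j) t)
    (hXwT : Xw T = 0)
    (hXwRDE : ∀ t ∈ Icc (0:ℝ) T,
      Xw' t + (A2 t)ᵀ * Xw t + Xw t * A2 t + (C2 t)ᵀ * Mw t * C2 t -
        (Xw t * B2 t + (C2 t)ᵀ * Mw t * D2 t) * ((D2 t)ᵀ * Mw t * D2 t)⁻¹ *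
          (Xw t * B2 t + (C2 t)ᵀ * Mw t * D2 t)ᵀ = 0)
    -- continuous square roots W_v, W_w
    (Wv : ℝ → Matrix (Fin nv) (Fin nv) ℝ) (Ww : ℝ → Matrix (Fin nw) (Fin nw) ℝ)
    (hWvcont : ∀ i j, ContinuousOn (fun t => Wv t i j) (Icc 0 T))
    (hWwcont : ∀ i j, ContinuousOn (fun t => Ww t i j) (Icc 0 T))
    (hWv : ∀ t ∈ Icc (0:ℝ) T, (Wv t)ᵀ * Wv t = (D1 t)ᵀ * Mv t * D1 t)
    (hWw : ∀ t ∈ Icc (0:ℝ) T, (Ww t)ᵀ * Ww t = (D2 t)ᵀ * Mw t * D2 t) :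
    -- conclusion: scaled nominal performance bound for every zero-IC trajectory
    ∀ (w : ℝ → Fin nw → ℝ) (d : ℝ → Fin nd → ℝ)
      (xN : ℝ → Fin nN → ℝ) (xv : ℝ → Fin n1 → ℝ) (xw : ℝ → Fin n2 → ℝ),
      (∀ i, ContinuousOn (fun t => w t i) (Icc 0 T)) →
      (∀ i, ContinuousOn (fun t => d t i) (Icc 0 T)) →
      xN 0 = 0 → xv 0 = 0 → xw 0 = 0 →
      (∀ t ∈ Icc (0:ℝ) T, ∀ i,
        HasDerivAt (fun s => xN s i)
          ((AN t *ᵥ xN t + Bw t *ᵥ w t + Bd t *ᵥ d t) i) t) →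
      (∀ t ∈ Icc (0:ℝ) T, ∀ i,
        HasDerivAt (fun s => xv s i)
          ((A1 t *ᵥ xv t +
            B1 t *ᵥ (Cv t *ᵥ xN t + Dvw t *ᵥ w t + Dvd t *ᵥ d t)) i) t) →
      (∀ t ∈ Icc (0:ℝ) T, ∀ i,
        HasDerivAt (fun s => xw s i)
          ((A2 t *ᵥ xw t + B2 t *ᵥ w t) i) t) →
      (CE T *ᵥ xN T) ⬝ᵥ (CE T *ᵥ xN T) +
        (∫ t in (0:ℝ)..T,
          ((((Wv t)ᵀ)⁻¹ *ᵥ (((B1 t)ᵀ * Xv t + (D1 t)ᵀ * Mv t * C1 t) *ᵥ xv t) +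
              Wv t *ᵥ (Cv t *ᵥ xN t + Dvw t *ᵥ w t + Dvd t *ᵥ d t)) ⬝ᵥ
           (((Wv t)ᵀ)⁻¹ *ᵥ (((B1 t)ᵀ * Xv t + (D1 t)ᵀ * Mv t * C1 t) *ᵥ xv t) +
              Wv t *ᵥ (Cv t *ᵥ xN t + Dvw t *ᵥ w t + Dvd t *ᵥ d t)) +
           (CI t *ᵥ xN t + DIw t *ᵥ w t + DId t *ᵥ d t) ⬝ᵥ
             (CI t *ᵥ xN t + DIw t *ᵥ w t + DId t *ᵥ d t))) ≤
      (∫ t in (0:ℝ)..T,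
        (((Ww t)ᵀ)⁻¹ *ᵥ (((B2 t)ᵀ * Xw t + (D2 t)ᵀ * Mw t * C2 t) *ᵥ xw t) +
            Ww t *ᵥ w t) ⬝ᵥ
          (((Ww t)ᵀ)⁻¹ *ᵥ (((B2 t)ᵀ * Xw t + (D2 t)ᵀ * Mw t * C2 t) *ᵥ xw t) +
            Ww t *ᵥ w t)) +
        (1 - ε / γ ^ 2) * ∫ t in (0:ℝ)..T, (γ • d t) ⬝ᵥ (γ • d t) := by
  intro w d xN xv xw hw hd hxN0 hxv0 hxw0 hxN' hxv' hxw'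
  have hWvu t ht := isUnit_det_of_transpose_mul_self_eq (hMvpd t ht) (hD1rank t ht) (hWv t ht)
  have hWwu t ht := isUnit_det_of_transpose_mul_self_eq (hMwpd t ht) (hD2rank t ht) (hWw t ht)
  have hwc : ContinuousOn w (Icc 0 T) := continuousOn_pi.2 hw
  have hdc : ContinuousOn d (Icc 0 T) := continuousOn_pi.2 hd
  have hxNc := continuousOn_of_hasDerivAt_apply hxN'
  have hvc := (((continuousOn_matrix hCv).matrix_mulVec hxNc).add
    ((continuousOn_matrix hDvw).matrix_mulVec hwc)).add
    ((continuousOn_matrix hDvd).matrix_mulVec hdc)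
  have heIc := (((continuousOn_matrix hCI).matrix_mulVec hxNc).add
    ((continuousOn_matrix hDIw).matrix_mulVec hwc)).add
    ((continuousOn_matrix hDId).matrix_mulVec hdc)
  have hvsc := continuousOn_scaledSignal (continuousOn_matrix hWvcont) hWvu
    (continuousOn_matrix hB1) (continuousOn_matrix_of_hasDerivAt_apply hXvderiv)
    (continuousOn_matrix hD1) (continuousOn_matrix hMvcont) (continuousOn_matrix hC1)
    (continuousOn_of_hasDerivAt_apply hxv') hvc
  have hwsc := continuousOn_scaledSignal (continuousOn_matrix hWwcont) hWwu
    (continuousOn_matrix hB2) (continuousOn_matrix_of_hasDerivAt_apply hXwderiv)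
    (continuousOn_matrix hD2) (continuousOn_matrix hMwcont) (continuousOn_matrix hC2)
    (continuousOn_of_hasDerivAt_apply hxw') hwc
  refine add_integral_le_of_dissipation hT.le
    (fun t ht => ((hasDerivAt_quadForm (hasDerivAt_sumElim_apply (hxN' t ht)
      (hasDerivAt_sumElim_apply (hxv' t ht) (hxw' t ht))) (hPderiv t ht)).sub
      (hasDerivAt_quadForm (hxv' t ht) (hXvderiv t ht))).add
      (hasDerivAt_quadForm (hxw' t ht) (hXwderiv t ht)))
    ((hvsc.dotProduct hvsc).add (heIc.dotProduct heIc)) (hwsc.dotProduct hwsc)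
    ((hdc.const_smul γ).dotProduct (hdc.const_smul γ)) (fun t ht => ?_)
    (by simp [hxN0, hxv0, hxw0]) ?_
  · replace ht := Ioo_subset_Icc_self ht
    exact scaled_dissipation_le (hDLMI t ht _) (hXvsym t ht) (hMvsym t ht) (hWv t ht) (hWvu t ht)
      (hXvRDE t ht) (hXwsym t ht) (hMwsym t ht) (hWw t ht) (hWwu t ht) (hXwRDE t ht) hε.le hγ.ne'
  · simpa [fromCols_mulVec_sumElim, hXvT, hXwT] using
      mulVec_dotProduct_le_of_nonneg_sub (hPT (Sum.elim (xN T) (Sum.elim (xv T) (xw T))))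

/-- the scaled-plant nominal performance bound. If the robust
performance differential LMI holds for the extended system of plant `N` and
block-diagonal IQC filter `Ψ = diag(Ψ_v, Ψ_w)` with `M = diag(M_v, -M_w)`, then the
scaled signals `ṽ, w̃` (from the finite-horizon factorization) and `d̃ = γ d` satisfy
`‖e_E(T)‖² + ∫(‖ṽ‖² + ‖e_I‖²) ≤ ∫‖w̃‖² + (1 - ε/γ²)∫‖d̃‖²`. -/
theorem scaled_plant_nominal_performance
    {nN n1 n2 nv nw nd nzv nzw nI nE : ℕ} {T : ℝ} (hT : 0 < T)
    -- plant N
    (AN : ℝ → Matrix (Fin nN) (Fin nN) ℝ)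
    (Bw : ℝ → Matrix (Fin nN) (Fin nw) ℝ)
    (Bd : ℝ → Matrix (Fin nN) (Fin nd) ℝ)
    (Cv : ℝ → Matrix (Fin nv) (Fin nN) ℝ)
    (Dvw : ℝ → Matrix (Fin nv) (Fin nw) ℝ)
    (Dvd : ℝ → Matrix (Fin nv) (Fin nd) ℝ)
    (CI : ℝ → Matrix (Fin nI) (Fin nN) ℝ)
    (DIw : ℝ → Matrix (Fin nI) (Fin nw) ℝ)
    (DId : ℝ → Matrix (Fin nI) (Fin nd) ℝ)
    (CE : ℝ → Matrix (Fin nE) (Fin nN) ℝ)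
    -- IQC filter blocks Ψ_v, Ψ_w
    (A1 : ℝ → Matrix (Fin n1) (Fin n1) ℝ) (B1 : ℝ → Matrix (Fin n1) (Fin nv) ℝ)
    (C1 : ℝ → Matrix (Fin nzv) (Fin n1) ℝ) (D1 : ℝ → Matrix (Fin nzv) (Fin nv) ℝ)
    (A2 : ℝ → Matrix (Fin n2) (Fin n2) ℝ) (B2 : ℝ → Matrix (Fin n2) (Fin nw) ℝ)
    (C2 : ℝ → Matrix (Fin nzw) (Fin n2) ℝ) (D2 : ℝ → Matrix (Fin nzw) (Fin nw) ℝ)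
    (hAN : ∀ i j, ContinuousOn (fun t => AN t i j) (Icc 0 T))
    (hBw : ∀ i j, ContinuousOn (fun t => Bw t i j) (Icc 0 T))
    (hBd : ∀ i j, ContinuousOn (fun t => Bd t i j) (Icc 0 T))
    (hCv : ∀ i j, ContinuousOn (fun t => Cv t i j) (Icc 0 T))
    (hDvw : ∀ i j, ContinuousOn (fun t => Dvw t i j) (Icc 0 T))
    (hDvd : ∀ i j, ContinuousOn (fun t => Dvd t i j) (Icc 0 T))
    (hCI : ∀ i j, ContinuousOn (fun t => CI t i j) (Icc 0 T))
    (hDIw : ∀ i j, ContinuousOn (fun t => DIw t i j) (Icc 0 T))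
    (hDId : ∀ i j, ContinuousOn (fun t => DId t i j) (Icc 0 T))
    (hCE : ∀ i j, ContinuousOn (fun t => CE t i j) (Icc 0 T))
    (hA1 : ∀ i j, ContinuousOn (fun t => A1 t i j) (Icc 0 T))
    (hB1 : ∀ i j, ContinuousOn (fun t => B1 t i j) (Icc 0 T))
    (hC1 : ∀ i j, ContinuousOn (fun t => C1 t i j) (Icc 0 T))
    (hD1 : ∀ i j, ContinuousOn (fun t => D1 t i j) (Icc 0 T))
    (hA2 : ∀ i j, ContinuousOn (fun t => A2 t i j) (Icc 0 T))
    (hB2 : ∀ i j, ContinuousOn (fun t => B2 t i j) (Icc 0 T))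
    (hC2 : ∀ i j, ContinuousOn (fun t => C2 t i j) (Icc 0 T))
    (hD2 : ∀ i j, ContinuousOn (fun t => D2 t i j) (Icc 0 T))
    -- full column rank of D₁, D₂
    (hD1rank : ∀ t ∈ Icc (0:ℝ) T, ∀ u : Fin nv → ℝ, D1 t *ᵥ u = 0 → u = 0)
    (hD2rank : ∀ t ∈ Icc (0:ℝ) T, ∀ u : Fin nw → ℝ, D2 t *ᵥ u = 0 → u = 0)
    -- IQC multipliers M_v ≻ 0, M_w ≻ 0
    (Mv : ℝ → Matrix (Fin nzv) (Fin nzv) ℝ) (Mw : ℝ → Matrix (Fin nzw) (Fin nzw) ℝ)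
    (hMvcont : ∀ i j, ContinuousOn (fun t => Mv t i j) (Icc 0 T))
    (hMwcont : ∀ i j, ContinuousOn (fun t => Mw t i j) (Icc 0 T))
    (hMvsym : ∀ t ∈ Icc (0:ℝ) T, (Mv t)ᵀ = Mv t)
    (hMwsym : ∀ t ∈ Icc (0:ℝ) T, (Mw t)ᵀ = Mw t)
    (hMvpd : ∀ t ∈ Icc (0:ℝ) T, ∀ u : Fin nzv → ℝ, u ≠ 0 → 0 < u ⬝ᵥ (Mv t *ᵥ u))
    (hMwpd : ∀ t ∈ Icc (0:ℝ) T, ∀ u : Fin nzw → ℝ, u ≠ 0 → 0 < u ⬝ᵥ (Mw t *ᵥ u))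
    (ε γ : ℝ) (hε : 0 < ε) (hγ : 0 < γ)
    -- storage matrix P for the extended system
    (P P' : ℝ → Matrix (Fin nN ⊕ (Fin n1 ⊕ Fin n2)) (Fin nN ⊕ (Fin n1 ⊕ Fin n2)) ℝ)
    (hPsym : ∀ t ∈ Icc (0:ℝ) T, (P t)ᵀ = P t)
    (hPderiv : ∀ t ∈ Icc (0:ℝ) T, ∀ i j, HasDerivAt (fun s => P s i j) (P' t i j) t)
    (hP'cont : ∀ i j, ContinuousOn (fun t => P' t i j) (Icc 0 T))
    -- terminal condition P(T) - 𝒞_E(T)ᵀ𝒞_E(T) ⪰ 0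
    (hPT : ∀ u : (Fin nN ⊕ (Fin n1 ⊕ Fin n2)) → ℝ,
      0 ≤ u ⬝ᵥ ((P T -
        (fromCols (CE T) (0 : Matrix (Fin nE) (Fin n1 ⊕ Fin n2) ℝ))ᵀ *
          fromCols (CE T) (0 : Matrix (Fin nE) (Fin n1 ⊕ Fin n2) ℝ)) *ᵥ u))
    -- the robust-performance differential LMI for the extended system
    (hDLMI : ∀ t ∈ Icc (0:ℝ) T,
      ∀ u : ((Fin nN ⊕ (Fin n1 ⊕ Fin n2)) ⊕ (Fin nw ⊕ Fin nd)) → ℝ,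
      u ⬝ᵥ ((dlmiRob (P' t) (P t)
        (fromBlocks (AN t) 0 (fromRows (B1 t * Cv t) 0)
          (fromBlocks (A1 t) 0 0 (A2 t)))
        (fromRows (fromCols (Bw t) (Bd t))
          (fromRows (fromCols (B1 t * Dvw t) (B1 t * Dvd t))
            (fromCols (B2 t) 0)))
        ((fromCols (CI t) (0 : Matrix (Fin nI) (Fin n1 ⊕ Fin n2) ℝ))ᵀ *
          fromCols (CI t) (0 : Matrix (Fin nI) (Fin n1 ⊕ Fin n2) ℝ))
        ((fromCols (CI t) (0 : Matrix (Fin nI) (Fin n1 ⊕ Fin n2) ℝ))ᵀ *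
          fromCols (DIw t) (DId t))
        ((fromCols (DIw t) (DId t))ᵀ * fromCols (DIw t) (DId t) -
          γ ^ 2 • fromBlocks (0 : Matrix (Fin nw) (Fin nw) ℝ) 0 0
            (1 : Matrix (Fin nd) (Fin nd) ℝ))
        (fromBlocks (D1 t * Cv t) (fromCols (C1 t) 0) 0 (fromCols 0 (C2 t)))
        (fromBlocks (D1 t * Dvw t) (D1 t * Dvd t) (D2 t) 0)
        (fromBlocks (Mv t) 0 0 (-(Mw t))) ε) *ᵥ u) ≤ 0)
    -- factorization Riccati solutions with zero terminal conditions
    (Xv Xv' : ℝ → Matrix (Fin n1) (Fin n1) ℝ)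
    (hXvsym : ∀ t ∈ Icc (0:ℝ) T, (Xv t)ᵀ = Xv t)
    (hXvderiv : ∀ t ∈ Icc (0:ℝ) T, ∀ i j, HasDerivAt (fun s => Xv s i j) (Xv' t i j) t)
    (hXv'cont : ∀ i j, ContinuousOn (fun t => Xv' t i j) (Icc 0 T))
    (hXvT : Xv T = 0)
    (hXvRDE : ∀ t ∈ Icc (0:ℝ) T,
      Xv' t + (A1 t)ᵀ * Xv t + Xv t * A1 t + (C1 t)ᵀ * Mv t * C1 t -
        (Xv t * B1 t + (C1 t)ᵀ * Mv t * D1 t) * ((D1 t)ᵀ * Mv t * D1 t)⁻¹ *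
          (Xv t * B1 t + (C1 t)ᵀ * Mv t * D1 t)ᵀ = 0)
    (Xw Xw' : ℝ → Matrix (Fin n2) (Fin n2) ℝ)
    (hXwsym : ∀ t ∈ Icc (0:ℝ) T, (Xw t)ᵀ = Xw t)
    (hXwderiv : ∀ t ∈ Icc (0:ℝ) T, ∀ i j, HasDerivAt (fun s => Xw s i j) (Xw' t i j) t)
    (hXw'cont : ∀ i j, ContinuousOn (fun t => Xw' t i j) (Icc 0 T))
    (hXwT : Xw T = 0)
    (hXwRDE : ∀ t ∈ Icc (0:ℝ) T,
      Xw' t + (A2 t)ᵀ * Xw t + Xw t * A2 t + (C2 t)ᵀ * Mw t * C2 t -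
        (Xw t * B2 t + (C2 t)ᵀ * Mw t * D2 t) * ((D2 t)ᵀ * Mw t * D2 t)⁻¹ *
          (Xw t * B2 t + (C2 t)ᵀ * Mw t * D2 t)ᵀ = 0)
    -- continuous square roots W_v, W_w
    (Wv : ℝ → Matrix (Fin nv) (Fin nv) ℝ) (Ww : ℝ → Matrix (Fin nw) (Fin nw) ℝ)
    (hWvcont : ∀ i j, ContinuousOn (fun t => Wv t i j) (Icc 0 T))
    (hWwcont : ∀ i j, ContinuousOn (fun t => Ww t i j) (Icc 0 T))
    (hWv : ∀ t ∈ Icc (0:ℝ) T, (Wv t)ᵀ * Wv t = (D1 t)ᵀ * Mv t * D1 t)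
    (hWw : ∀ t ∈ Icc (0:ℝ) T, (Ww t)ᵀ * Ww t = (D2 t)ᵀ * Mw t * D2 t) :
    -- conclusion: scaled nominal performance bound for every zero-IC trajectory
    ∀ (w : ℝ → Fin nw → ℝ) (d : ℝ → Fin nd → ℝ)
      (xN : ℝ → Fin nN → ℝ) (xv : ℝ → Fin n1 → ℝ) (xw : ℝ → Fin n2 → ℝ),
      (∀ i, ContinuousOn (fun t => w t i) (Icc 0 T)) →
      (∀ i, ContinuousOn (fun t => d t i) (Icc 0 T)) →
      xN 0 = 0 → xv 0 = 0 → xw 0 = 0 →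
      (∀ t ∈ Icc (0:ℝ) T, ∀ i,
        HasDerivAt (fun s => xN s i)
          ((AN t *ᵥ xN t + Bw t *ᵥ w t + Bd t *ᵥ d t) i) t) →
      (∀ t ∈ Icc (0:ℝ) T, ∀ i,
        HasDerivAt (fun s => xv s i)
          ((A1 t *ᵥ xv t +
            B1 t *ᵥ (Cv t *ᵥ xN t + Dvw t *ᵥ w t + Dvd t *ᵥ d t)) i) t) →
      (∀ t ∈ Icc (0:ℝ) T, ∀ i,
        HasDerivAt (fun s => xw s i)
          ((A2 t *ᵥ xw t + B2 t *ᵥ w t) i) t) →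
      (CE T *ᵥ xN T) ⬝ᵥ (CE T *ᵥ xN T) +
        (∫ t in (0:ℝ)..T,
          ((((Wv t)ᵀ)⁻¹ *ᵥ (((B1 t)ᵀ * Xv t + (D1 t)ᵀ * Mv t * C1 t) *ᵥ xv t) +
              Wv t *ᵥ (Cv t *ᵥ xN t + Dvw t *ᵥ w t + Dvd t *ᵥ d t)) ⬝ᵥ
           (((Wv t)ᵀ)⁻¹ *ᵥ (((B1 t)ᵀ * Xv t + (D1 t)ᵀ * Mv t * C1 t) *ᵥ xv t) +
              Wv t *ᵥ (Cv t *ᵥ xN t + Dvw t *ᵥ w t + Dvd t *ᵥ d t)) +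
           (CI t *ᵥ xN t + DIw t *ᵥ w t + DId t *ᵥ d t) ⬝ᵥ
             (CI t *ᵥ xN t + DIw t *ᵥ w t + DId t *ᵥ d t))) ≤
      (∫ t in (0:ℝ)..T,
        (((Ww t)ᵀ)⁻¹ *ᵥ (((B2 t)ᵀ * Xw t + (D2 t)ᵀ * Mw t * C2 t) *ᵥ xw t) +
            Ww t *ᵥ w t) ⬝ᵥ
          (((Ww t)ᵀ)⁻¹ *ᵥ (((B2 t)ᵀ * Xw t + (D2 t)ᵀ * Mw t * C2 t) *ᵥ xw t) +
            Ww t *ᵥ w t)) +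
        (1 - ε / γ ^ 2) * ∫ t in (0:ℝ)..T, (γ • d t) ⬝ᵥ (γ • d t) :=
  scaled_plant_nominal_performance_general hT AN Bw Bd Cv Dvw Dvd CI DIw DId CE A1 B1 C1 D1 A2 B2 C2
    D2 hCv hDvw hDvd hCI hDIw hDId hB1 hC1 hD1 hB2 hC2 hD2 hD1rank hD2rank Mv Mw hMvcont hMwcont
    hMvsym hMwsym hMvpd hMwpd ε γ hε hγ P P' hPderiv hPT hDLMI Xv Xv' hXvsym hXvderiv hXvT hXvRDE Xw
    Xw' hXwsym hXwderiv hXwT hXwRDE Wv Ww hWvcont hWwcont hWv hWw
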